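/- arXiv:1510.00909 — 4 statements merged into one kernel-verified Lean document; each statement's English description precedes it below -/
import Mathlib

section
/- Every constant C ≥ 1 such that (Σ_{j₁=1}^{n} (Σ_{j₂=1}^{n} |T(e_{j₁}, e_{j₂})|^{4/3})^{(4/3)/(4/3)})^{3/4} ≤ C‖T‖ for all bilinear forms T : ℝⁿ × ℝⁿ → ℝ (with ℓ∞ norms) and all n, satisfies C ≥ 2^{1/2}. In other words, the optimal constant in the real bilinear Bohnenblust–Hille inequality is at least √2. -/
/-- The canonical basis vectors of `ℝⁿ`. -/
def e (n : ℕ) (j : Fin n) : Fin n → ℝ := fun i => if i = j then 1 else 0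

/-- The supremum norm of an `m`-linear form on `(ℓ∞ⁿ)^m`:
`sup{|T(x₁,...,x_m)| : ‖xᵢ‖∞ ≤ 1}`. -/
noncomputable def supNorm (m n : ℕ)
    (T : MultilinearMap ℝ (fun _ : Fin m => (Fin n → ℝ)) ℝ) : ℝ :=
  sSup {v : ℝ | ∃ x : Fin m → Fin n → ℝ, (∀ i, ‖x i‖ ≤ 1) ∧ v = |T x|}

/-!
Test the inequality with `n = 2` and the form `T(x, y) = x₁y₁ + x₁y₂ + x₂y₁ - x₂y₂`. All four
coefficients have modulus one, so the left-hand side is `4^{3/4} = 2√2`, while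
`T(x, y) = x₁(y₁ + y₂) + x₂(y₁ - y₂)` and `|y₁ + y₂| + |y₁ - y₂| = 2 max(|y₁|, |y₂|)` give
`‖T‖ ≤ 2`. Hence `2√2 ≤ 2C`.
-/

open Finset

lemma supNorm_nonneg {m n : ℕ} (T : MultilinearMap ℝ (fun _ : Fin m => (Fin n → ℝ)) ℝ) :
    0 ≤ supNorm m n T :=
  Real.sSup_nonneg <| by
    rintro v ⟨x, -, rfl⟩
    exact abs_nonneg _

lemma supNorm_le {m n : ℕ} {T : MultilinearMap ℝ (fun _ : Fin m => (Fin n → ℝ)) ℝ} {M : ℝ}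
    (hM : 0 ≤ M) (hT : ∀ x : Fin m → Fin n → ℝ, (∀ i, ‖x i‖ ≤ 1) → |T x| ≤ M) :
    supNorm m n T ≤ M :=
  Real.sSup_le (fun _ ⟨x, hx, hv⟩ => hv ▸ hT x hx) hM

def Matrix.bilinearForm {n : ℕ} (A : Matrix (Fin n) (Fin n) ℝ) :
    MultilinearMap ℝ (fun _ : Fin 2 => (Fin n → ℝ)) ℝ where
  toFun x := ∑ i, ∑ j, A i j * x 0 i * x 1 j
  map_update_add' := by
    intro _ x k a b
    fin_cases k <;> simp [mul_add, add_mul, sum_add_distrib]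
  map_update_smul' := by
    intro _ x k c a
    fin_cases k <;> simp [mul_sum, mul_left_comm, mul_assoc]

lemma Matrix.bilinearForm_apply {n : ℕ} (A : Matrix (Fin n) (Fin n) ℝ) (x : Fin 2 → Fin n → ℝ) :
    A.bilinearForm x = ∑ i, ∑ j, A i j * x 0 i * x 1 j :=
  rfl

lemma Matrix.bilinearForm_basis {n : ℕ} (A : Matrix (Fin n) (Fin n) ℝ) (i j : Fin n) :
    A.bilinearForm ![e n i, e n j] = A i j := by
  simp [Matrix.bilinearForm_apply, e]

lemma abs_add_add_abs_sub_le_two {a b : ℝ} (ha : |a| ≤ 1) (hb : |b| ≤ 1) :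
    |a + b| + |a - b| ≤ 2 := by
  rw [abs_le] at ha hb
  rcases abs_cases (a + b) with ⟨h₁, -⟩ | ⟨h₁, -⟩ <;>
    rcases abs_cases (a - b) with ⟨h₂, -⟩ | ⟨h₂, -⟩ <;> linarith

lemma abs_mul_add_mul_le_two {a b c d : ℝ} (ha : |a| ≤ 1) (hb : |b| ≤ 1) (hc : |c| ≤ 1)
    (hd : |d| ≤ 1) : |a * (c + d) + b * (c - d)| ≤ 2 :=
  calc |a * (c + d) + b * (c - d)| ≤ |a| * |c + d| + |b| * |c - d| := by
        simpa only [abs_mul] using abs_add_le (a * (c + d)) (b * (c - d))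
    _ ≤ 1 * |c + d| + 1 * |c - d| := by gcongr
    _ ≤ 2 := by simpa only [one_mul] using abs_add_add_abs_sub_le_two hc hd

def hadamard2 : Matrix (Fin 2) (Fin 2) ℝ := !![1, 1; 1, -1]

lemma supNorm_hadamard2_bilinearForm_le : supNorm 2 2 hadamard2.bilinearForm ≤ 2 := by
  refine supNorm_le zero_le_two fun x hx => ?_
  have hx' : ∀ i j, |x i j| ≤ 1 := fun i j => (norm_le_pi_norm (x i) j).trans (hx i)
  have hT : hadamard2.bilinearForm x = x 0 0 * (x 1 0 + x 1 1) + x 0 1 * (x 1 0 - x 1 1) := by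
    simp only [hadamard2, Matrix.bilinearForm_apply, Matrix.of_apply, Matrix.cons_val',
      Matrix.cons_val_fin_one, Fin.sum_univ_two, Matrix.cons_val_zero, Matrix.cons_val_one]
    ring
  rw [hT]
  exact abs_mul_add_mul_le_two (hx' 0 0) (hx' 0 1) (hx' 1 0) (hx' 1 1)

lemma four_rpow_three_div_four : (4 : ℝ) ^ ((3 : ℝ) / 4) = 2 * (2 : ℝ) ^ ((1 : ℝ) / 2) := by
  calc (4 : ℝ) ^ ((3 : ℝ) / 4) = (2 : ℝ) ^ ((2 : ℕ) * ((3 : ℝ) / 4)) := by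
        rw [Real.rpow_natCast_mul zero_le_two]
        norm_num
    _ = (2 : ℝ) ^ (1 + (1 : ℝ) / 2) := by norm_num
    _ = 2 * (2 : ℝ) ^ ((1 : ℝ) / 2) := by rw [Real.rpow_add zero_lt_two, Real.rpow_one]

theorem stmt_2_general (C : ℝ)
    (hC : ∀ n : ℕ, ∀ T : MultilinearMap ℝ (fun _ : Fin 2 => (Fin n → ℝ)) ℝ,
      (∑ j₁ : Fin n, ∑ j₂ : Fin n, |T ![e n j₁, e n j₂]| ^ ((4:ℝ)/3)) ^ ((3:ℝ)/4)
        ≤ C * supNorm 2 n T) :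
    (2:ℝ) ^ ((1:ℝ)/2) ≤ C := by
  set T := hadamard2.bilinearForm
  have hsum : ∑ j₁ : Fin 2, ∑ j₂ : Fin 2, |T ![e 2 j₁, e 2 j₂]| ^ ((4:ℝ)/3) = 4 := by
    norm_num [T, hadamard2, Matrix.bilinearForm_basis, Fin.sum_univ_two]
  have h := hC 2 T
  rw [hsum, four_rpow_three_div_four] at h
  have hT0 : 0 ≤ supNorm 2 2 T := supNorm_nonneg T
  have hsqrt : 0 < (2:ℝ) ^ ((1:ℝ)/2) := by positivity
  have hC0 : 0 ≤ C := by
    by_contra! hC0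
    linarith [mul_nonpos_of_nonpos_of_nonneg hC0.le hT0]
  linarith [mul_le_mul_of_nonneg_left supNorm_hadamard2_bilinearForm_le hC0]

/-- Any constant `C ≥ 1` in the real bilinear Bohnenblust–Hille inequality
(with exponent `4/3`) satisfies `C ≥ 2^{1/2}`. -/
theorem stmt_2 (C : ℝ) (hC1 : 1 ≤ C)
    (hC : ∀ n : ℕ, ∀ T : MultilinearMap ℝ (fun _ : Fin 2 => (Fin n → ℝ)) ℝ,
      (∑ j₁ : Fin n, ∑ j₂ : Fin n, |T ![e n j₁, e n j₂]| ^ ((4:ℝ)/3)) ^ ((3:ℝ)/4)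
        ≤ C * supNorm 2 n T) :
    (2:ℝ) ^ ((1:ℝ)/2) ≤ C :=
  stmt_2_general C hC
end

section
/- Define trilinear forms on ℝ⁴: T₃(x,y,z) = (z₁+z₂)T₂(x,y) + (z₁-z₂)T₂(B²x, B²y), where T₂(x,y)=x₁y₁+x₁y₂+x₂y₁-x₂y₂ and B is the backward shift on ℝ⁴ (so B²x = (x₃,x₄,0,0)). Then the supremum norm of T₃ over the unit ball of (ℓ∞⁴)³ equals 4. -/
/-!
Writing `T₂(x,y) = x₁(y₁+y₂) + x₂(y₁-y₂)` and `T₃(x,y,z) = (z₁+z₂)T₂(x,y) + (z₁-z₂)T₂(B²x,B²y)`,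
both forms have the shape `(c+d)a + (c-d)b`, which is bounded by `(|c+d| + |c-d|) max(|a|,|b|)`,
and `|c+d| + |c-d| = 2 max(|c|,|d|)`. Since `B²` does not increase the sup norm, this gives
`|T₂(x,y)| ≤ 2‖x‖‖y‖` and then `|T₃(x,y,z)| ≤ 4‖x‖‖y‖‖z‖`. Equality is attained at
`x = (1,1,1,1)`, `y = (1,0,1,0)`, `z = (1,0,0,0)`, where `T₂(x,y) = T₂(B²x,B²y) = 2`.
-/

/-- `T₂` acting on the first two coordinates of vectors in `ℝ⁴`. -/
def T2 (x y : Fin 4 → ℝ) : ℝ := x 0 * y 0 + x 0 * y 1 + x 1 * y 0 - x 1 * y 1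

/-- The square of the backward shift on `ℝ⁴`: `B²x = (x₃, x₄, 0, 0)`. -/
def Bsq (x : Fin 4 → ℝ) : Fin 4 → ℝ :=
  fun i => if h : (i : ℕ) + 2 < 4 then x ⟨(i : ℕ) + 2, h⟩ else 0

/-- The trilinear form `T₃(x,y,z) = (z₁+z₂)T₂(x,y) + (z₁-z₂)T₂(B²x, B²y)` on `(ℝ⁴)³`. -/
def T3 (x y z : Fin 4 → ℝ) : ℝ :=
  (z 0 + z 1) * T2 x y + (z 0 - z 1) * T2 (Bsq x) (Bsq y)

lemma abs_add_add_abs_sub_le {c d s : ℝ} (hc : |c| ≤ s) (hd : |d| ≤ s) :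
    |c + d| + |c - d| ≤ 2 * s := by
  rw [abs_le] at hc hd
  rcases abs_cases (c + d) with ⟨h₁, _⟩ | ⟨h₁, _⟩ <;>
    rcases abs_cases (c - d) with ⟨h₂, _⟩ | ⟨h₂, _⟩ <;> rw [h₁, h₂] <;> linarith

lemma abs_add_mul_add_sub_mul_le {a b c d r s : ℝ} (ha : |a| ≤ r) (hb : |b| ≤ r)
    (hc : |c| ≤ s) (hd : |d| ≤ s) :
    |(c + d) * a + (c - d) * b| ≤ 2 * s * r := by
  have hr : 0 ≤ r := (abs_nonneg a).trans ha
  calc |(c + d) * a + (c - d) * b| ≤ |c + d| * |a| + |c - d| * |b| := by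
        simpa only [abs_mul] using abs_add_le ((c + d) * a) ((c - d) * b)
    _ ≤ (|c + d| + |c - d|) * r := by
        rw [add_mul]; gcongr
    _ ≤ 2 * s * r := by
        gcongr; exact abs_add_add_abs_sub_le hc hd

lemma norm_Bsq_le (x : Fin 4 → ℝ) : ‖Bsq x‖ ≤ ‖x‖ := by
  refine (pi_norm_le_iff_of_nonneg (norm_nonneg x)).2 fun i => ?_
  unfold Bsq
  split_ifs
  · exact norm_le_pi_norm x _
  · simp

lemma abs_T2_le (x y : Fin 4 → ℝ) : |T2 x y| ≤ 2 * ‖y‖ * ‖x‖ := by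
  have hT2 : T2 x y = (y 0 + y 1) * x 0 + (y 0 - y 1) * x 1 := by unfold T2; ring
  rw [hT2]
  exact abs_add_mul_add_sub_mul_le (norm_le_pi_norm x 0) (norm_le_pi_norm x 1)
    (norm_le_pi_norm y 0) (norm_le_pi_norm y 1)

lemma abs_T3_le (x y z : Fin 4 → ℝ) : |T3 x y z| ≤ 4 * ‖x‖ * ‖y‖ * ‖z‖ := by
  have hB : |T2 (Bsq x) (Bsq y)| ≤ 2 * ‖y‖ * ‖x‖ :=
    (abs_T2_le _ _).trans (by gcongr <;> exact norm_Bsq_le _)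
  calc |T3 x y z| ≤ 2 * ‖z‖ * (2 * ‖y‖ * ‖x‖) :=
        abs_add_mul_add_sub_mul_le (abs_T2_le x y) hB (norm_le_pi_norm z 0) (norm_le_pi_norm z 1)
    _ = 4 * ‖x‖ * ‖y‖ * ‖z‖ := by ring

lemma T3_extremal : T3 (fun _ => 1) ![1, 0, 1, 0] ![1, 0, 0, 0] = 4 := by
  norm_num [T3, T2, Bsq]

/-- The supremum of `|T₃|` over the unit ball of `(ℓ∞⁴)³` equals `4`. -/
theorem stmt_3 :
    sSup {v : ℝ | ∃ x y z : Fin 4 → ℝ, ‖x‖ ≤ 1 ∧ ‖y‖ ≤ 1 ∧ ‖z‖ ≤ 1 ∧ v = |T3 x y z|}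
      = 4 := by
  refine IsGreatest.csSup_eq ⟨?_, ?_⟩
  · refine ⟨fun _ => 1, ![1, 0, 1, 0], ![1, 0, 0, 0], ?_, ?_, ?_, by rw [T3_extremal]; norm_num⟩ <;>
      exact (pi_norm_le_iff_of_nonneg zero_le_one).2 fun i => by fin_cases i <;> simp
  · rintro v ⟨x, y, z, hx, hy, hz, rfl⟩
    calc |T3 x y z| ≤ 4 * ‖x‖ * ‖y‖ * ‖z‖ := abs_T3_le x y z
      _ ≤ 4 * 1 * 1 * 1 := by gcongr
      _ = 4 := by norm_num
end

section
/- With T_m the inductively defined m-linear forms on (ℝ^{2^{m-1}})^m (T₂(x,y)=x₁y₁+x₁y₂+x₂y₁-x₂y₂; T_m(x⁽¹⁾,...,x⁽ᵐ⁾) = (x₁⁽ᵐ⁾+x₂⁽ᵐ⁾)T_{m-1}(x⁽¹⁾,...,x⁽ᵐ⁻¹⁾) + (x₁⁽ᵐ⁾-x₂⁽ᵐ⁾)T_{m-1}(B^{2^{m-2}}x⁽¹⁾, B^{2^{m-2}}x⁽²⁾, ..., B²x⁽ᵐ⁻¹⁾)), for all q₁,...,q_m ∈ [1,2] the iterated mixed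 sum (Σ_{j₁=1}^{2^{m-1}}(⋯(Σ_{j_m=1}^{2^{m-1}} |T_m(e_{j₁},...,e_{j_m})|^{q_m})^{q_{m-1}/q_m}⋯)^{q₁/q₂})^{1/q₁} equals 2^{((m-1)q̂₁ + Σ_{i=2}^m q̂ᵢ)/(q₁q₂⋯q_m)}, where q̂ᵢ = q₁⋯q_m/qᵢ. -/
/-- The iterated mixed `ℓ_{q₁}(ℓ_{q₂}(⋯ℓ_{q_m}))` norm of an `m`-indexed array
`f` with indices ranging over `{0, ..., N-1}`:
`(Σ_{j₁<N}(⋯(Σ_{j_m<N}|f(j₁,...,j_m)|^{q_m})^{q_{m-1}/q_m}⋯)^{q₁/q₂})^{1/q₁}`. -/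
noncomputable def mixedNorm : (m : ℕ) → (N : ℕ) → (ℕ → ℝ) → ((ℕ → ℕ) → ℝ) → ℝ
  | 0, _, _, f => |f fun _ => 0|
  | m + 1, N, q, f =>
      (∑ j : Fin N, (mixedNorm m N (fun i => q (i + 1))
          (fun idx => f (fun i => if i = 0 then (j : ℕ) else idx (i - 1)))) ^ q 0)
        ^ (1 / q 0)

/-- The `j`-th canonical basis vector of `ℝⁿ` (interpreted as `0` if `j ≥ n`). -/
def eVec (n : ℕ) (j : ℕ) : Fin n → ℝ := fun i => if (i : ℕ) = j then 1 else 0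

/-- The shift exponents in the inductive definition of `T_m`. -/
def Tshift (m k : ℕ) : ℕ := if k ≤ 1 then 2 ^ (m - 1) else 2 ^ (m - k)

/-- The inductively defined `m`-linear forms `T_m` of Diniz et al.:
`T₂(x,y) = x₁y₁ + x₁y₂ + x₂y₁ - x₂y₂` and
`T_{m+1}(x⁽¹⁾,...,x⁽ᵐ⁺¹⁾) = (x₁⁽ᵐ⁺¹⁾+x₂⁽ᵐ⁺¹⁾)T_m(x⁽¹⁾,...,x⁽ᵐ⁾)
  + (x₁⁽ᵐ⁺¹⁾-x₂⁽ᵐ⁺¹⁾)T_m(B^{2^{m-1}}x⁽¹⁾, B^{2^{m-1}}x⁽²⁾, B^{2^{m-2}}x⁽³⁾, ..., B²x⁽ᵐ⁾)`,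
where `B` is the backward shift. The `k`-th argument (0-indexed) is `x k : ℕ → ℝ`. -/
noncomputable def Tform : ℕ → (ℕ → ℕ → ℝ) → ℝ
  | 0, _ => 0
  | 1, x => x 0 0
  | 2, x => x 0 0 * x 1 0 + x 0 0 * x 1 1 + x 0 1 * x 1 0 - x 0 1 * x 1 1
  | m + 3, x =>
      (x (m + 2) 0 + x (m + 2) 1) * Tform (m + 2) x
        + (x (m + 2) 0 - x (m + 2) 1)
            * Tform (m + 2) (fun k j => x k (j + Tshift (m + 2) k))

lemma sub_pow_div (a u v : ℕ) (hv : v ≤ u) (ha : 2^u ≤ a) :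
    (a - 2^u) / 2^v = a / 2^v - 2^(u-v) := by
  have h : 2^u = 2^v * 2^(u-v) := by rw [← pow_add]; congr 1; omega
  rw [h] at ha ⊢
  exact Nat.sub_mul_div a (2^v) (2^(u-v))

lemma pow_le_div (a u v : ℕ) (hv : v ≤ u) (ha : 2^u ≤ a) : 2^(u-v) ≤ a / 2^v := by
  calc 2^(u-v) = 2^u / 2^v := by rw [Nat.pow_div hv (by norm_num)]
  _ ≤ a / 2^v := Nat.div_le_div_right ha

lemma tform_congr : ∀ (M : ℕ) (x y : ℕ → ℕ → ℝ), (∀ k, k < M → ∀ j, x k j = y k j) →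
    Tform M x = Tform M y := by
  intro M
  induction M using Nat.strong_induction_on with
  | _ M ih =>
    match M with
    | 0 => intro x y h; simp [Tform]
    | 1 => intro x y h; simp [Tform, h 0 (by norm_num)]
    | 2 => intro x y h; simp [Tform, h 0 (by norm_num), h 1 (by norm_num)]
    | (m+3) =>
      intro x y h
      have h2 := h (m+2) (by omega)
      simp only [Tform]
      rw [ih (m+2) (by omega) x y (fun k hk j => h k (by omega) j),
          ih (m+2) (by omega) (fun k j => x k (j + Tshift (m+2) k))
            (fun k j => y k (j + Tshift (m+2) k)) (fun k hk j => h k (by omega) _),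
          h2 0, h2 1]

lemma tform_zero : ∀ (M : ℕ) (x : ℕ → ℕ → ℝ) (k : ℕ), k < M → (∀ j, x k j = 0) →
    Tform M x = 0 := by
  intro M
  induction M using Nat.strong_induction_on with
  | _ M ih =>
    match M with
    | 0 => intro x k hk hx; simp [Tform]
    | 1 => intro x k hk hx
           interval_cases k
           simp [Tform, hx]
    | 2 => intro x k hk hx
           interval_cases k <;> simp [Tform, hx]
    | (m+3) =>
      intro x k hk hx
      simp only [Tform]
      rcases Nat.lt_or_ge k (m+2) with h | h
      · rw [ih (m+2) (by omega) x k h hx,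
            ih (m+2) (by omega) (fun k j => x k (j + Tshift (m+2) k)) k h (fun j => hx _)]
        ring
      · obtain rfl : k = m + 2 := by omega
        simp [hx]

open scoped Classical in
lemma tform_char_base (J : ℕ → ℕ) :
    Tform 2 (fun k j => if j = J k then 1 else 0)
      = if (J 0 < 2^(2-1) ∧ ∀ i, 1 ≤ i → i < 2 → J i / 2 = J 0 / 2^i)
        then (-1:ℝ) ^ (∑ i ∈ Finset.Ico 1 2, (J 0 / 2^(i-1) % 2) * (J i % 2)) else 0 := by
  have hsum : ∑ i ∈ Finset.Ico 1 2, (J 0 / 2^(i-1) % 2) * (J i % 2)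
      = (J 0 % 2) * (J 1 % 2) := by simp
  rw [hsum]
  rcases hJ0 : J 0 with _ | _ | a <;> rcases hJ1 : J 1 with _ | _ | b
  · rw [if_pos ⟨by omega, fun i h1 h2 => by
        obtain rfl : i = 1 := (by omega); simp [hJ0, hJ1]⟩]
    simp [Tform, hJ0, hJ1]
  · rw [if_pos ⟨by omega, fun i h1 h2 => by
        obtain rfl : i = 1 := (by omega); simp [hJ0, hJ1]⟩]
    simp [Tform, hJ0, hJ1]
  · rw [if_neg (by rintro ⟨-, h⟩; have := h 1 le_rfl one_lt_two; simp [hJ0, hJ1] at this)]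
    simp [Tform, hJ0, hJ1]
  · rw [if_pos ⟨by omega, fun i h1 h2 => by
        obtain rfl : i = 1 := (by omega); simp [hJ0, hJ1]⟩]
    simp [Tform, hJ0, hJ1]
  · rw [if_pos ⟨by omega, fun i h1 h2 => by
        obtain rfl : i = 1 := (by omega); simp [hJ0, hJ1]⟩]
    simp [Tform, hJ0, hJ1]
  · rw [if_neg (by rintro ⟨-, h⟩; have := h 1 le_rfl one_lt_two; simp [hJ0, hJ1] at this)]
    simp [Tform, hJ0, hJ1]
  · rw [if_neg (by rintro ⟨h, -⟩; omega)]
    simp [Tform, hJ0, hJ1]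
  · rw [if_neg (by rintro ⟨h, -⟩; omega)]
    simp [Tform, hJ0, hJ1]
  · rw [if_neg (by rintro ⟨h, -⟩; omega)]
    simp [Tform, hJ0, hJ1]

open scoped Classical in
lemma tform_char : ∀ (M : ℕ), 2 ≤ M → ∀ J : ℕ → ℕ,
    Tform M (fun k j => if j = J k then 1 else 0)
      = if (J 0 < 2^(M-1) ∧ ∀ i, 1 ≤ i → i < M → J i / 2 = J 0 / 2^i)
        then (-1:ℝ) ^ (∑ i ∈ Finset.Ico 1 M, (J 0 / 2^(i-1) % 2) * (J i % 2)) else 0 := by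
  intro M hM
  induction M, hM using Nat.le_induction with
  | base => exact tform_char_base
  | succ n hn ih =>
    obtain ⟨m, rfl⟩ : ∃ m, n = m + 2 := ⟨n - 2, by omega⟩
    intro J
    -- the main unified computation
    have main : ∀ ε : ℕ, ε ≤ 1 → J (m+2) = ε →
        Tform (m+2) (fun k j => if j = J k then 1 else 0)
          + (-1:ℝ)^ε * Tform (m+2) (fun k j => if j + Tshift (m+2) k = J k then 1 else 0)
        = if (J 0 < 2^(m+2) ∧ ∀ i, 1 ≤ i → i < m+3 → J i / 2 = J 0 / 2^i)
          then (-1:ℝ)^(∑ i ∈ Finset.Ico 1 (m+3), (J 0 / 2^(i-1) % 2) * (J i % 2))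
          else 0 := by
      intro ε hε hJM
      have hIH := ih J
      have hM21 : m + 2 - 1 = m + 1 := rfl
      rw [hM21] at hIH
      have hsumsplit : ∑ i ∈ Finset.Ico 1 (m+3), (J 0 / 2^(i-1) % 2) * (J i % 2)
          = (∑ i ∈ Finset.Ico 1 (m+2), (J 0 / 2^(i-1) % 2) * (J i % 2))
            + (J 0 / 2^(m+1) % 2) * (J (m+2) % 2) := by
        rw [Finset.sum_Ico_succ_top (by omega)]
        norm_num
      by_cases h0 : J 0 < 2^(m+1)
      · -- first-half case: shifted form vanishes
        have hb : J 0 / 2^(m+1) = 0 := Nat.div_eq_of_lt h0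
        have hshift0 : Tform (m+2) (fun k j => if j + Tshift (m+2) k = J k then 1 else 0) = 0 := by
          apply tform_zero (m+2) _ 0 (by omega)
          intro j
          have hs : Tshift (m+2) 0 = 2^(m+1) := by simp [Tshift]
          rw [hs, if_neg (by omega)]
        rw [hshift0, mul_zero, add_zero, hIH]
        by_cases hc : (J 0 < 2^(m+2) ∧ ∀ i, 1 ≤ i → i < m+3 → J i / 2 = J 0 / 2^i)
        · rw [if_pos hc, if_pos ⟨h0, fun i h1 h2 => hc.2 i h1 (by omega)⟩,
            hsumsplit, hb]
          norm_num
        · rw [if_neg hc, if_neg ?_]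
          rintro ⟨-, h⟩
          exact hc ⟨by calc J 0 < 2^(m+1) := h0
                      _ ≤ 2^(m+2) := Nat.pow_le_pow_right (by norm_num) (by omega),
            fun i h1 h2 => by
              rcases Nat.lt_or_ge i (m+2) with hi | hi
              · exact h i h1 hi
              · obtain rfl : i = m + 2 := by omega
                rw [hJM, Nat.div_eq_of_lt (by omega),
                  Nat.div_eq_of_lt (by calc J 0 < 2^(m+1) := h0
                    _ ≤ 2^(m+2) := Nat.pow_le_pow_right (by norm_num) (by omega))]⟩
      · -- second-half case
        push_neg at h0
        have hT0 : Tform (m+2) (fun k j => if j = J k then 1 else 0) = 0 := by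
          rw [hIH, if_neg]; rintro ⟨h, -⟩; omega
        rw [hT0, zero_add]
        have hsk : ∀ k, 1 ≤ k → k ≤ m + 1 → Tshift (m+2) k = 2^(m+2-k) := by
          intro k h1 h2
          unfold Tshift
          rcases Nat.lt_or_ge k 2 with h | h
          · obtain rfl : k = 1 := by omega
            rw [if_pos (by omega)]
          · rw [if_neg (by omega)]
        have hs0 : Tshift (m+2) 0 = 2^(m+1) := by simp [Tshift]
        by_cases hall : ∀ k, k < m + 2 → Tshift (m+2) k ≤ J k
        · -- all shifts valid
          have hcongr : Tform (m+2) (fun k j => if j + Tshift (m+2) k = J k then 1 else 0)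
              = Tform (m+2) (fun k j => if j = (fun k => J k - Tshift (m+2) k) k then 1 else 0) := by
            apply tform_congr
            intro k hk j
            have h := hall k hk
            by_cases hj : j + Tshift (m+2) k = J k
            · rw [if_pos hj, if_pos (by simp only []; omega)]
            · rw [if_neg hj, if_neg (by simp only []; omega)]
          rw [hcongr, ih (fun k => J k - Tshift (m+2) k)]
          simp only [hs0, hM21]
          -- equivalence of conditions
          have hcond : (J 0 - 2^(m+1) < 2^(m+1)
                ∧ ∀ i, 1 ≤ i → i < m+2 → (J i - Tshift (m+2) i) / 2 = (J 0 - 2^(m+1)) / 2^i)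
              ↔ (J 0 < 2^(m+2) ∧ ∀ i, 1 ≤ i → i < m+3 → J i / 2 = J 0 / 2^i) := by
            have hpow : (2:ℕ)^(m+2) = 2 * 2^(m+1) := by ring
            constructor
            · rintro ⟨ha, hb'⟩
              refine ⟨by omega, fun i h1 h2 => ?_⟩
              rcases Nat.lt_or_ge i (m+2) with hi | hi
              · have key := hb' i h1 hi
                have hsub0 : (J 0 - 2^(m+1)) / 2^i = J 0 / 2^i - 2^(m+1-i) :=
                  sub_pow_div _ _ _ (by omega) h0
                have hle0 : 2^(m+1-i) ≤ J 0 / 2^i := pow_le_div _ _ _ (by omega) h0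
                have hsi : Tshift (m+2) i = 2^(m+2-i) := hsk i h1 (by omega)
                have hJi : 2^(m+2-i) ≤ J i := by
                  have := hall i (by omega); omega
                have hsubi : (J i - 2^(m+2-i)) / 2 = J i / 2 - 2^(m+1-i) := by
                  have h2i : (2:ℕ)^(m+2-i) = 2 * 2^(m+1-i) := by
                    rw [← pow_succ']; congr 1; omega
                  omega
                have hlei : 2^(m+1-i) ≤ J i / 2 := by
                  have h2i : (2:ℕ)^(m+2-i) = 2 * 2^(m+1-i) := by
                    rw [← pow_succ']; congr 1; omega
                  omega
                rw [hsi, hsubi, hsub0] at key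
                omega
              · obtain rfl : i = m + 2 := by omega
                rw [hJM, Nat.div_eq_of_lt (by omega), Nat.div_eq_of_lt (by omega)]
            · rintro ⟨ha, hb'⟩
              refine ⟨by omega, fun i h1 h2 => ?_⟩
              have key := hb' i h1 (by omega)
              have hsub0 : (J 0 - 2^(m+1)) / 2^i = J 0 / 2^i - 2^(m+1-i) :=
                sub_pow_div _ _ _ (by omega) h0
              have hle0 : 2^(m+1-i) ≤ J 0 / 2^i := pow_le_div _ _ _ (by omega) h0
              have hsi : Tshift (m+2) i = 2^(m+2-i) := hsk i h1 (by omega)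
              have hJi : 2^(m+2-i) ≤ J i := by
                have := hall i (by omega); omega
              have h2i : (2:ℕ)^(m+2-i) = 2 * 2^(m+1-i) := by
                rw [← pow_succ']; congr 1; omega
              rw [hsi, hsub0]
              omega
          by_cases hc : (J 0 < 2^(m+2) ∧ ∀ i, 1 ≤ i → i < m+3 → J i / 2 = J 0 / 2^i)
          · rw [if_pos hc, if_pos (hcond.mpr hc)]
            -- signs
            have hbit : J 0 / 2^(m+1) = 1 := by
              have hpow : (2:ℕ)^(m+2) = 2 * 2^(m+1) := by ring
              have h1 : J 0 / 2^(m+1) < 2 := Nat.div_lt_of_lt_mul (by omega)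
              have h2 : 1 ≤ J 0 / 2^(m+1) := (Nat.one_le_div_iff (by positivity)).2 h0
              omega
            have hsums : ∑ i ∈ Finset.Ico 1 (m+2),
                  ((J 0 - 2^(m+1)) / 2^(i-1) % 2) * ((J i - Tshift (m+2) i) % 2)
                = ∑ i ∈ Finset.Ico 1 (m+2), (J 0 / 2^(i-1) % 2) * (J i % 2) := by
              apply Finset.sum_congr rfl
              intro i hi
              rw [Finset.mem_Ico] at hi
              have hsub0 : (J 0 - 2^(m+1)) / 2^(i-1) = J 0 / 2^(i-1) - 2^(m+2-i) := by
                have he : (2:ℕ)^(m+1-(i-1)) = 2^(m+2-i) := by congr 1; omega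
                rw [sub_pow_div (J 0) (m+1) (i-1) (by omega) h0, he]
              have hle0 : 2^(m+2-i) ≤ J 0 / 2^(i-1) := by
                have h1 := pow_le_div (J 0) (m+1) (i-1) (by omega) h0
                have he : (2:ℕ)^(m + 1 - (i-1)) = 2^(m + 2 - i) := by congr 1; omega
                rw [he] at h1; exact h1
              have h2i : (2:ℕ)^(m+2-i) = 2 * 2^(m+1-i) := by
                rw [← pow_succ']; congr 1; omega
              have hsi : Tshift (m+2) i = 2^(m+2-i) := hsk i hi.1 (by omega)
              have hJi : 2^(m+2-i) ≤ J i := by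
                have := hall i (by omega); rw [hsi] at this; exact this
              rw [hsi, hsub0]
              congr 1
              · omega
              · omega
            rw [hsums, hsumsplit, hJM, hbit, show (1:ℕ) % 2 = 1 from rfl, one_mul,
              Nat.mod_eq_of_lt (show ε < 2 by omega), pow_add, mul_comm]
          · rw [if_neg hc, if_neg (fun h => hc (hcond.mp h)), mul_zero]
        · -- some shift invalid: both sides zero
          push_neg at hall
          obtain ⟨k, hk, hlt⟩ := hall
          have hsh0 : Tform (m+2) (fun k j => if j + Tshift (m+2) k = J k then 1 else 0) = 0 := by
            apply tform_zero (m+2) _ k hk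
            intro j
            rw [if_neg (by omega)]
          rw [hsh0, mul_zero]
          rw [if_neg]
          rintro ⟨ha, hb'⟩
          have hk1 : 1 ≤ k := by
            by_contra h
            obtain rfl : k = 0 := by omega
            rw [hs0] at hlt; omega
          have key := hb' k hk1 (by omega)
          have hsi : Tshift (m+2) k = 2^(m+2-k) := hsk k hk1 (by omega)
          have hle0 : 2^(m+1-k) ≤ J 0 / 2^k := pow_le_div _ _ _ (by omega) h0
          have h2i : (2:ℕ)^(m+2-k) = 2 * 2^(m+1-k) := by
            rw [← pow_succ']; congr 1; omega
          rw [hsi] at hlt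
          omega
    -- dispatch on J (m+2)
    show Tform (m+3) _ = _
    simp only [Tform]
    simp only [show m + 2 + 1 - 1 = m + 2 from rfl]
    simp only [show m + 2 + 1 = m + 3 from rfl]
    rcases hJM : J (m+2) with _ | _ | c
    · have h := main 0 (by omega) hJM
      simp only [pow_zero, one_mul] at h
      rw [← h]
      norm_num
    · have h := main 1 (by omega) hJM
      simp only [pow_one] at h
      rw [← h]
      norm_num
    · -- J (m+2) ≥ 2 : everything vanishes
      norm_num
      intro ha hb'
      have h2 := hb' (m+2) (by omega) (by omega)
      rw [hJM, Nat.div_eq_of_lt (show J 0 < 2^(m+2) from ha)] at h2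
      omega

lemma mixedNorm_zero : ∀ (m N : ℕ) (q : ℕ → ℝ), 0 < N → (∀ i, i < m → 1 ≤ q i) →
    mixedNorm m N q (fun _ => 0) = 0 := by
  intro m
  induction m with
  | zero => intro N q hN hq; simp [mixedNorm]
  | succ m ih =>
    intro N q hN hq
    have hq0 : q 0 ≠ 0 := by have := hq 0 (by omega); linarith
    simp only [mixedNorm]
    have h1 : ∀ j : Fin N, (mixedNorm m N (fun i => q (i + 1))
        (fun idx => (fun _ : ℕ → ℕ => (0:ℝ)) (fun i => if i = 0 then (j:ℕ) else idx (i-1)))) ^ q 0 = 0 := by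
      intro j
      rw [show (fun idx : ℕ → ℕ => (fun _ : ℕ → ℕ => (0:ℝ)) (fun i => if i = 0 then (j:ℕ) else idx (i-1)))
          = (fun _ : ℕ → ℕ => (0:ℝ)) from rfl,
        ih N _ hN (fun i hi => hq (i+1) (by omega)), Real.zero_rpow hq0]
    rw [Finset.sum_congr rfl (fun j _ => h1 j), Finset.sum_const, smul_zero,
      Real.zero_rpow (one_div_ne_zero hq0)]

open scoped Classical in
lemma mixedNorm_prod : ∀ (m N : ℕ) (q : ℕ → ℝ) (a : ℕ → ℕ) (f : (ℕ → ℕ) → ℝ),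
    0 < N → (∀ i, i < m → 1 ≤ q i) → (∀ i, i < m → 2 * a i + 1 < N) →
    (∀ idx : ℕ → ℕ, |f idx| = if (∀ i, i < m → idx i / 2 = a i) then 1 else 0) →
    mixedNorm m N q f = ∏ i ∈ Finset.range m, (2:ℝ) ^ (1 / q i) := by
  intro m
  induction m with
  | zero =>
    intro N q a f hN hq ha hf
    have := hf (fun _ => 0)
    rw [if_pos (by intro i hi; omega)] at this
    simpa [mixedNorm] using this
  | succ m ih =>
    intro N q a f hN hq ha hf
    have hq0 : (1:ℝ) ≤ q 0 := hq 0 (by omega)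
    have hq0' : q 0 ≠ 0 := by linarith
    simp only [mixedNorm]
    set P : ℝ := ∏ i ∈ Finset.range m, (2:ℝ) ^ (1 / q (i+1)) with hP
    have hPpos : 0 ≤ P := Finset.prod_nonneg (fun i _ => Real.rpow_nonneg (by norm_num) _)
    have key : ∀ j : Fin N, (mixedNorm m N (fun i => q (i + 1))
          (fun idx => f (fun i => if i = 0 then (j:ℕ) else idx (i-1)))) ^ q 0
        = if (j:ℕ) / 2 = a 0 then P ^ q 0 else 0 := by
      intro j
      by_cases hj : (j:ℕ) / 2 = a 0
      · rw [if_pos hj, ih N _ (fun i => a (i+1)) _ hN (fun i hi => hq (i+1) (by omega))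
          (fun i hi => ha (i+1) (by omega)) ?_]
        intro idx
        rw [hf (fun i => if i = 0 then (j:ℕ) else idx (i-1))]
        refine if_congr ?_ rfl rfl
        constructor
        · intro h i hi
          have := h (i+1) (by omega)
          simpa using this
        · intro h i hi
          rcases Nat.eq_zero_or_pos i with rfl | hpos
          · simpa using hj
          · have h2 : idx (i-1) / 2 = a (i - 1 + 1) := h (i-1) (by omega)
            rw [show i - 1 + 1 = i from by omega] at h2
            simp only [if_neg (by omega : ¬ i = 0)]
            exact h2
      · rw [if_neg hj]
        have hzero : (fun idx : ℕ → ℕ => f (fun i => if i = 0 then (j:ℕ) else idx (i-1)))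
            = (fun _ : ℕ → ℕ => (0:ℝ)) := by
          funext idx
          have := hf (fun i => if i = 0 then (j:ℕ) else idx (i-1))
          rw [if_neg (by intro h; exact hj (by simpa using h 0 (by omega)))] at this
          exact abs_eq_zero.mp this
        rw [hzero, mixedNorm_zero m N _ hN (fun i hi => hq (i+1) (by omega)),
          Real.zero_rpow hq0']
    rw [Finset.sum_congr rfl (fun j _ => key j)]
    have hsum : ∑ j : Fin N, (if (j:ℕ) / 2 = a 0 then P ^ q 0 else 0)
        = 2 * P ^ q 0 := by
      rw [Fin.sum_univ_eq_sum_range (fun x => if x / 2 = a 0 then P ^ q 0 else 0) N,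
        ← Finset.sum_filter]
      have hfil : Finset.filter (fun x => x / 2 = a 0) (Finset.range N)
          = {2 * a 0, 2 * a 0 + 1} := by
        ext x
        simp only [Finset.mem_filter, Finset.mem_range, Finset.mem_insert,
          Finset.mem_singleton]
        have := ha 0 (by omega)
        omega
      rw [hfil, Finset.sum_insert (by simp), Finset.sum_singleton]
      ring
    rw [hsum, Real.mul_rpow (by norm_num) (Real.rpow_nonneg hPpos _),
      ← Real.rpow_mul hPpos, mul_one_div_cancel hq0', Real.rpow_one,
      Finset.prod_range_succ']
    ring

/-- The iterated mixed sum of `|T_m(e_{j₁},...,e_{j_m})|` with exponents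
`q₁,...,q_m ∈ [1,2]` equals `2^{((m-1)q̂₁ + Σ_{i=2}^m q̂ᵢ)/(q₁⋯q_m)}`,
where `q̂ᵢ = (q₁⋯q_m)/qᵢ`. -/
theorem stmt_7 (m : ℕ) (hm : 2 ≤ m) (q : ℕ → ℝ)
    (hq : ∀ i < m, q i ∈ Set.Icc (1:ℝ) 2) :
    mixedNorm m (2 ^ (m - 1)) q
        (fun idx => Tform m (fun k j => if j = idx k then 1 else 0))
      = (2:ℝ) ^ ((((m : ℝ) - 1) * ((∏ i ∈ Finset.range m, q i) / q 0)
            + ∑ i ∈ Finset.Ico 1 m, (∏ i ∈ Finset.range m, q i) / q i)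
          / ∏ i ∈ Finset.range m, q i) := by
  obtain ⟨n, rfl⟩ : ∃ n, m = n + 2 := ⟨m - 2, by omega⟩
  have hq1 : ∀ i, i < n + 2 → 1 ≤ q i := fun i hi => (hq i hi).1
  have hqpos : ∀ i, i < n + 2 → 0 < q i := fun i hi => lt_of_lt_of_le one_pos (hq1 i hi)
  have hq0 : (1:ℝ) ≤ q 0 := hq1 0 (by omega)
  have hq0' : q 0 ≠ 0 := by linarith
  have hN : 0 < 2 ^ (n + 1) := Nat.pow_pos (by norm_num)
  simp only [show n + 2 - 1 = n + 1 from rfl]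
  set P : ℝ := ∏ i ∈ Finset.range (n+1), (2:ℝ) ^ (1 / q (i+1)) with hPdef
  have hPpos : 0 ≤ P := Finset.prod_nonneg (fun i _ => Real.rpow_nonneg (by norm_num) _)
  have key : ∀ j : Fin (2^(n+1)),
      mixedNorm (n+1) (2^(n+1)) (fun i => q (i + 1))
        (fun idx => Tform (n+2) (fun k j' =>
          if j' = (if k = 0 then (j:ℕ) else idx (k - 1)) then 1 else 0)) = P := by
    intro j
    have hjlt : (j:ℕ) < 2^(n+1) := j.isLt
    apply mixedNorm_prod (n+1) (2^(n+1)) _ (fun i => (j:ℕ) / 2^(i+1)) _ hN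
      (fun i hi => hq1 (i+1) (by omega))
    · -- bounds on a
      intro i hi
      have h2 : (2:ℕ) ≤ 2^(i+1) := by
        calc (2:ℕ) = 2^1 := rfl
        _ ≤ 2^(i+1) := Nat.pow_le_pow_right (by norm_num) (by omega)
      have h1 : (j:ℕ)/2^(i+1) ≤ (j:ℕ)/2 := Nat.div_le_div_left h2 (by norm_num)
      have hp : (2:ℕ)^(n+1) = 2 * 2^n := by ring
      omega
    · -- abs values
      intro idx
      have hchar := tform_char (n+2) (by omega) (fun i => if i = 0 then (j:ℕ) else idx (i-1))
      simp only [show n + 2 - 1 = n + 1 from rfl] at hchar ⊢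
      beta_reduce at hchar
      rw [hchar]
      simp only [if_true]
      by_cases hC : ((j:ℕ) < 2^(n+1) ∧ ∀ i, 1 ≤ i → i < n+2 →
          (if i = 0 then (j:ℕ) else idx (i-1)) / 2 = (j:ℕ) / 2^i)
      · rw [if_pos hC, if_pos ?_]
        · rw [abs_pow, abs_neg, abs_one, one_pow]
        · intro i hi
          have h2 := hC.2 (i+1) (by omega) (by omega)
          simp only [if_neg (by omega : ¬ i + 1 = 0)] at h2
          exact h2
      · rw [if_neg hC, if_neg ?_, abs_zero]
        intro h
        apply hC
        refine ⟨hjlt, fun i h1 h2 => ?_⟩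
        simp only [if_neg (by omega : ¬ i = 0)]
        have h3 := h (i-1) (by omega)
        rw [show i - 1 + 1 = i from by omega] at h3
        exact h3
  have hL : (∑ j : Fin (2^(n+1)),
        (mixedNorm (n+1) (2^(n+1)) (fun i => q (i + 1))
          (fun idx => Tform (n+2) (fun k j' =>
            if j' = (if k = 0 then (j:ℕ) else idx (k - 1)) then 1 else 0))) ^ q 0)
      = ((2^(n+1) : ℕ) : ℝ) * P ^ q 0 := by
    rw [Finset.sum_congr rfl (fun j _ => by rw [key j]), Finset.sum_const,
      Finset.card_univ, Fintype.card_fin, nsmul_eq_mul]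
  rw [mixedNorm, hL]
  have h2P : ((2^(n+1) : ℕ) : ℝ) = (2:ℝ) ^ (((n+1 : ℕ)) : ℝ) := by
    rw [Real.rpow_natCast]; push_cast; ring
  rw [h2P, Real.mul_rpow (Real.rpow_nonneg (by norm_num) _) (Real.rpow_nonneg hPpos _),
    ← Real.rpow_mul (by norm_num : (0:ℝ) ≤ 2),
    ← Real.rpow_mul hPpos, mul_one_div_cancel hq0', Real.rpow_one]
  have hPS : P = (2:ℝ) ^ (∑ i ∈ Finset.range (n+1), 1 / q (i+1)) :=
    hPdef.trans (Real.rpow_sum_of_pos (by norm_num) _ _).symm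
  rw [hPS, ← Real.rpow_add (by norm_num : (0:ℝ) < 2)]
  congr 1
  have hQ : (0:ℝ) < ∏ i ∈ Finset.range (n+2), q i :=
    Finset.prod_pos (fun i hi => hqpos i (Finset.mem_range.mp hi))
  set Q := ∏ i ∈ Finset.range (n+2), q i with hQdef
  have hQne : Q ≠ 0 := ne_of_gt hQ
  have hdiv : ∀ x : ℝ, x ≠ 0 → (Q / x) / Q = 1 / x := by
    intro x hx
    rw [div_div, mul_comm x Q, ← div_div, div_self hQne]
  rw [add_div, Finset.sum_div, mul_div_assoc, hdiv (q 0) hq0']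
  have hsumIco : ∑ i ∈ Finset.Ico 1 (n+2), Q / q i / Q
      = ∑ i ∈ Finset.Ico 1 (n+2), 1 / q i :=
    Finset.sum_congr rfl (fun i hi => hdiv (q i) (ne_of_gt (hqpos i (Finset.mem_Ico.mp hi).2)))
  rw [hsumIco]
  have hre : ∑ i ∈ Finset.range (n+1), 1 / q (i+1)
      = ∑ i ∈ Finset.Ico 1 (n+2), 1 / q i := by
    rw [Finset.sum_Ico_eq_sum_range]
    apply Finset.sum_congr (by norm_num)
    intro i hi
    rw [add_comm 1 i]
  rw [hre]
  push_cast
  ring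
end

section
/- The iterated mixed sum identity for T_m implies that (Σ_{j₁,...,j_m=1}^{2^{m-1}} |T_m(e_{j₁},...,e_{j_m})|^{2m/(m+1)})^{(m+1)/(2m)} = 2^{(m-1)/m} · 2^{m-1}, and hence any constant C with (Σ_{i₁,...,i_m ≤ n}|T(e_{i₁},...,e_{i_m})|^{2m/(m+1)})^{(m+1)/(2m)} ≤ C‖T‖ for all real m-linear forms T on (ℓ∞ⁿ)^m satisfies C ≥ 2^{(m-1)/m} = 2^{1-1/m}. -/
section Lemmas

lemma Tshift_pos (m k : ℕ) : 0 < Tshift m k := by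
  unfold Tshift; split <;> positivity

lemma Tshift_le (m k : ℕ) : Tshift m k ≤ 2 ^ (m - 1) := by
  unfold Tshift; split
  · exact le_rfl
  · exact Nat.pow_le_pow_right (by norm_num) (by omega)

lemma Tshift_succ (m k : ℕ) (hm : 1 ≤ m) (hk : k < m) :
    Tshift (m + 1) k = 2 * Tshift m k := by
  unfold Tshift
  rcases le_or_gt k 1 with h | h
  · rw [if_pos h, if_pos h]
    have : m + 1 - 1 = (m - 1) + 1 := by omega
    rw [this, pow_succ]; ring
  · rw [if_neg (by omega), if_neg (by omega)]
    have : m + 1 - k = (m - k) + 1 := by omega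
    rw [this, pow_succ]; ring

lemma Tshift_last (m : ℕ) (hm : 1 ≤ m) : Tshift (m + 1) m = 2 := by
  unfold Tshift
  split
  · have : m = 1 := by omega
    subst this; rfl
  · have : m + 1 - m = 1 := by omega
    rw [this]; rfl

lemma Tform_succ (m : ℕ) (hm : 1 ≤ m) (x : ℕ → ℕ → ℝ) :
    Tform (m + 1) x = (x m 0 + x m 1) * Tform m x
      + (x m 0 - x m 1) * Tform m (fun k j => x k (j + Tshift m k)) := by
  match m, hm with
  | 1, _ =>
    show Tform 2 x = _
    simp only [Tform, Tshift]
    norm_num; ring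
  | (M + 2), _ => rfl

lemma Tform_congr (m : ℕ) (x y : ℕ → ℕ → ℝ) (h : ∀ k < m, ∀ i, x k i = y k i) :
    Tform m x = Tform m y := by
  induction m generalizing x y with
  | zero => rfl
  | succ m ih =>
    rcases Nat.eq_zero_or_pos m with rfl | hm
    · show x 0 0 = y 0 0
      exact h 0 (by omega) 0
    · rw [Tform_succ m hm, Tform_succ m hm]
      rw [ih _ _ (fun k hk i => h k (by omega) i),
        ih (fun k j => x k (j + Tshift m k)) (fun k j => y k (j + Tshift m k))
          (fun k hk i => h k (by omega) _),
        h m (by omega) 0, h m (by omega) 1]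

end Lemmas

/-- coefficient of `T_M` at multi-index `j - t` (zero if out of support). -/
noncomputable def dCoef (M : ℕ) (t j : ℕ → ℕ) : ℝ :=
  Tform M (fun k i => if i + t k = j k then 1 else 0)

lemma dCoef_congr (M : ℕ) (t j j' : ℕ → ℕ) (h : ∀ k < M, j k = j' k) :
    dCoef M t j = dCoef M t j' := by
  unfold dCoef
  exact Tform_congr _ _ _ (fun k hk i => by rw [h k hk])

lemma dCoef_succ (M : ℕ) (hM : 1 ≤ M) (t j : ℕ → ℕ) :
    dCoef (M + 1) t j
      = ((if t M = j M then (1:ℝ) else 0) + (if t M + 1 = j M then (1:ℝ) else 0))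
          * dCoef M t j
        + ((if t M = j M then (1:ℝ) else 0) - (if t M + 1 = j M then (1:ℝ) else 0))
          * dCoef M (fun k => t k + Tshift M k) j := by
  unfold dCoef
  rw [Tform_succ M hM]
  have e1 : (0 + t M = j M) = (t M = j M) := propext (by omega)
  have e2 : (1 + t M = j M) = (t M + 1 = j M) := propext (by omega)
  simp only [e1, e2]
  congr 2
  exact Tform_congr _ _ _ (fun k hk i => if_congr (by omega) rfl rfl)

lemma dCoef_cases (M : ℕ) (hM : 1 ≤ M) (t j : ℕ → ℕ) :
    (dCoef M t j = 1 ∨ dCoef M t j = 0 ∨ dCoef M t j = -1) ∧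
      ((∃ k < M, j k < t k ∨ t k + Tshift M k ≤ j k) → dCoef M t j = 0) := by
  induction M, hM using Nat.le_induction generalizing t with
  | base =>
    have hsh : Tshift 1 0 = 1 := rfl
    have hval : dCoef 1 t j = if 0 + t 0 = j 0 then (1:ℝ) else 0 := rfl
    rw [hval]
    constructor
    · split <;> simp
    · rintro ⟨k, hk, hcase⟩
      have hk0 : k = 0 := by omega
      subst hk0
      rw [hsh] at hcase
      rw [if_neg (by omega)]
  | succ M hM ih =>
    rw [dCoef_succ M hM]
    set t' : ℕ → ℕ := fun k => t k + Tshift M k with ht'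
    have hdisj : dCoef M t j ≠ 0 → dCoef M t' j = 0 := by
      intro hA
      have hsupp : ∀ k < M, t k ≤ j k ∧ j k < t k + Tshift M k := by
        intro k hk
        by_contra hc
        exact hA ((ih t).2 ⟨k, hk, by omega⟩)
      exact (ih t').2 ⟨0, hM, Or.inl (by
        have := (hsupp 0 hM).2
        simp only [ht']
        omega)⟩
    constructor
    · rcases eq_or_ne (t M) (j M) with h1 | h1
      · rw [if_pos h1, if_neg (by omega)]
        rcases eq_or_ne (dCoef M t j) 0 with hA | hA
        · rw [hA]
          have := (ih t').1
          rcases this with h | h | h <;> rw [h] <;> norm_num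
        · rw [hdisj hA]
          have := (ih t).1
          rcases this with h | h | h <;> rw [h] <;> norm_num
      · rcases eq_or_ne (t M + 1) (j M) with h2 | h2
        · rw [if_neg h1, if_pos h2]
          rcases eq_or_ne (dCoef M t j) 0 with hA | hA
          · rw [hA]
            have := (ih t').1
            rcases this with h | h | h <;> rw [h] <;> norm_num
          · rw [hdisj hA]
            have := (ih t).1
            rcases this with h | h | h <;> rw [h] <;> norm_num
        · rw [if_neg h1, if_neg h2]
          norm_num
    · rintro ⟨k, hk, hcase⟩
      rcases eq_or_ne k M with hkM | hkM
      · rw [hkM] at hcase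
        rw [Tshift_last M hM] at hcase
        rw [if_neg (by omega), if_neg (by omega)]
        norm_num
      · have hkM' : k < M := by omega
        have hsh := Tshift_succ M k hM hkM'
        have hA : dCoef M t j = 0 := (ih t).2 ⟨k, hkM', by omega⟩
        have hB : dCoef M t' j = 0 := (ih t').2 ⟨k, hkM', by
          simp only [ht']
          omega⟩
        rw [hA, hB]
        ring

lemma dCoef_sum_sq (M : ℕ) (hM : 1 ≤ M) (t : ℕ → ℕ) (N : ℕ)
    (hN : ∀ k < M, t k + Tshift M k ≤ N) :
    ∑ j : Fin M → Fin N,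
        (dCoef M t (fun k => if h : k < M then (j ⟨k, h⟩ : ℕ) else 0)) ^ 2
      = (4 : ℝ) ^ (M - 1) := by
  induction M, hM using Nat.le_induction generalizing t with
  | base =>
    have ht0 : t 0 + 1 ≤ N := by
      have := hN 0 (by omega)
      simpa [Tshift] using this
    set a0 : Fin N := ⟨t 0, by omega⟩ with ha0
    have key : ∀ j : Fin 1 → Fin N,
        dCoef 1 t (fun k => if h : k < 1 then (j ⟨k, h⟩ : ℕ) else 0)
          = if j 0 = a0 then (1:ℝ) else 0 := by
      intro j
      show (if 0 + t 0 = (if h : (0:ℕ) < 1 then (j ⟨0, h⟩ : ℕ) else 0) then (1:ℝ) else 0) = _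
      rw [dif_pos (by omega)]
      have h00 : j ⟨0, by omega⟩ = j 0 := congrArg j (Subsingleton.elim _ _)
      rw [h00]
      refine if_congr ?_ rfl rfl
      rw [Fin.ext_iff]
      show 0 + t 0 = (j 0 : ℕ) ↔ (j 0 : ℕ) = t 0
      omega
    simp only [key]
    have sq1 : ∀ (p : Prop) (inst : Decidable p), ((if p then (1:ℝ) else 0))^2 = if p then 1 else 0 := by
      intro p inst; split <;> norm_num
    simp only [sq1]
    rw [show (∑ x : Fin 1 → Fin N, if x 0 = a0 then (1:ℝ) else 0)
        = ∑ a : Fin N, if a = a0 then (1:ℝ) else 0 from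
      Fintype.sum_equiv (Equiv.funUnique (Fin 1) (Fin N)) _ _ (fun j => rfl),
      Finset.sum_ite_eq' Finset.univ a0 (fun _ => (1:ℝ))]
    simp
  | succ M hM ih =>
    have h2 : Tshift (M + 1) M = 2 := Tshift_last M hM
    have htM : t M + 2 ≤ N := by
      have := hN M (by omega)
      omega
    set a1 : Fin N := ⟨t M, by omega⟩ with ha1
    set a2 : Fin N := ⟨t M + 1, by omega⟩ with ha2
    have ha12 : a1 ≠ a2 := by
      rw [Fin.ne_iff_vne]
      show t M ≠ t M + 1
      omega
    set J : (Fin M → Fin N) → ℕ → ℕ :=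
      fun j' k => if h : k < M then (j' ⟨k, h⟩ : ℕ) else 0 with hJ
    set A : (Fin M → Fin N) → ℝ := fun j' => dCoef M t (J j') with hA
    set B : (Fin M → Fin N) → ℝ :=
      fun j' => dCoef M (fun k => t k + Tshift M k) (J j') with hB
    have e1 : (∑ j : Fin (M + 1) → Fin N,
          (dCoef (M + 1) t (fun k => if h : k < M + 1 then (j ⟨k, h⟩ : ℕ) else 0)) ^ 2)
        = ∑ p : Fin N × (Fin M → Fin N),
          (dCoef (M + 1) t (fun k => if h : k < M + 1 then
            ((Fin.snoc p.2 p.1 : Fin (M + 1) → Fin N) ⟨k, h⟩ : ℕ) else 0)) ^ 2 :=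
      (Fintype.sum_equiv (Fin.snocEquiv (fun _ => Fin N)) _ _ (fun p => rfl)).symm
    rw [e1, Fintype.sum_prod_type, Finset.sum_comm]
    have key : ∀ (j' : Fin M → Fin N) (a : Fin N),
        (dCoef (M + 1) t (fun k => if h : k < M + 1 then
            ((Fin.snoc j' a : Fin (M + 1) → Fin N) ⟨k, h⟩ : ℕ) else 0)) ^ 2
          = (if a = a1 then (A j' + B j') ^ 2 else 0)
            + (if a = a2 then (A j' - B j') ^ 2 else 0) := by
      intro j' a
      set jj : ℕ → ℕ := fun k => if h : k < M + 1 then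
        ((Fin.snoc j' a : Fin (M + 1) → Fin N) ⟨k, h⟩ : ℕ) else 0 with hjj
      have hjM : jj M = (a : ℕ) := by
        rw [hjj]
        simp only
        rw [dif_pos (by omega)]
        show ((Fin.snoc j' a : Fin (M + 1) → Fin N) (Fin.last M) : ℕ) = a
        rw [Fin.snoc_last]
      have hjk : ∀ k < M, jj k = J j' k := by
        intro k hk
        rw [hjj, hJ]
        simp only
        rw [dif_pos (by omega), dif_pos hk]
        show ((Fin.snoc j' a : Fin (M + 1) → Fin N) (Fin.castSucc ⟨k, hk⟩) : ℕ) = _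
        rw [Fin.snoc_castSucc]
      have hAc : dCoef M t jj = A j' := dCoef_congr M t jj (J j') hjk
      have hBc : dCoef M (fun k => t k + Tshift M k) jj = B j' :=
        dCoef_congr M _ jj (J j') hjk
      rw [dCoef_succ M hM, hjM, hAc, hBc]
      have hva1 : (a1 : ℕ) = t M := rfl
      have hva2 : (a2 : ℕ) = t M + 1 := rfl
      rcases eq_or_ne a a1 with rfl | hne1
      · rw [hva1]
        rw [if_pos (rfl : t M = t M), if_neg (show ¬ t M + 1 = t M by omega),
          if_pos (rfl : a1 = a1), if_neg ha12]
        ring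
      · rcases eq_or_ne a a2 with rfl | hne2
        · rw [hva2]
          rw [if_neg (show ¬ t M = t M + 1 by omega), if_pos (rfl : t M + 1 = t M + 1),
            if_neg (show ¬ a2 = a1 from fun h => ha12 h.symm), if_pos (rfl : a2 = a2)]
          ring
        · rw [if_neg (show ¬ t M = (a : ℕ) from fun h => hne1 (Fin.ext (by rw [hva1, ← h]))),
            if_neg (show ¬ t M + 1 = (a : ℕ) from fun h => hne2 (Fin.ext (by rw [hva2, ← h]))),
            if_neg hne1, if_neg hne2]
          ring
    simp only [key]
    have inner : ∀ j' : Fin M → Fin N,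
        (∑ a : Fin N, ((if a = a1 then (A j' + B j') ^ 2 else 0)
            + (if a = a2 then (A j' - B j') ^ 2 else 0)))
          = 2 * (A j') ^ 2 + 2 * (B j') ^ 2 := by
      intro j'
      rw [Finset.sum_add_distrib,
        Finset.sum_ite_eq' Finset.univ a1 (fun _ => (A j' + B j') ^ 2),
        Finset.sum_ite_eq' Finset.univ a2 (fun _ => (A j' - B j') ^ 2)]
      simp only [Finset.mem_univ, if_pos]
      ring
    simp only [inner]
    rw [Finset.sum_add_distrib, ← Finset.mul_sum, ← Finset.mul_sum]
    have hNA : ∀ k < M, t k + Tshift M k ≤ N := by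
      intro k hk
      have := hN k (by omega)
      rw [Tshift_succ M k hM hk] at this
      omega
    have hNB : ∀ k < M, (t k + Tshift M k) + Tshift M k ≤ N := by
      intro k hk
      have := hN k (by omega)
      rw [Tshift_succ M k hM hk] at this
      omega
    rw [ih t hNA, ih (fun k => t k + Tshift M k) hNB]
    have hMm : M + 1 - 1 = (M - 1) + 1 := by omega
    rw [hMm, pow_succ]
    ring

lemma Tform_update_add (m : ℕ) (x : ℕ → ℕ → ℝ) (k : ℕ) (hk : k < m) (a b : ℕ → ℝ) :
    Tform m (Function.update x k (a + b))
      = Tform m (Function.update x k a) + Tform m (Function.update x k b) := by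
  induction m generalizing x k a b with
  | zero => omega
  | succ m ih =>
    rcases Nat.eq_zero_or_pos m with rfl | hm
    · have hk0 : k = 0 := by omega
      subst hk0
      show (Function.update x 0 (a + b)) 0 0 = _
      simp [Tform, Function.update_self]
    · rw [Tform_succ m hm, Tform_succ m hm, Tform_succ m hm]
      rcases eq_or_ne k m with rfl | hkm
      · have hz : ∀ v : ℕ → ℝ, Tform k (Function.update x k v) = Tform k x :=
          fun v => Tform_congr _ _ _ (fun k' hk' i => by
            rw [Function.update_of_ne (by omega)])
        have hz' : ∀ v : ℕ → ℝ,
            Tform k (fun k' j => Function.update x k v k' (j + Tshift k k'))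
              = Tform k (fun k' j => x k' (j + Tshift k k')) :=
          fun v => Tform_congr _ _ _ (fun k' hk' i => by
            rw [Function.update_of_ne (by omega)])
        rw [hz, hz, hz, hz', hz', hz']
        simp only [Function.update_self, Pi.add_apply]
        ring
      · have hkm' : k < m := by omega
        have hup : ∀ v : ℕ → ℝ, Function.update x k v m = x m :=
          fun v => Function.update_of_ne (by omega) _ _
        have hsh : ∀ v : ℕ → ℝ,
            (fun k' j => Function.update x k v k' (j + Tshift m k'))
              = Function.update (fun k' j => x k' (j + Tshift m k')) k
                  (fun j => v (j + Tshift m k)) := by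
          intro v
          funext k' j
          rcases eq_or_ne k' k with rfl | h
          · simp [Function.update_self]
          · simp [Function.update_of_ne h]
        have hab : (fun j => (a + b) (j + Tshift m k))
            = (fun j => a (j + Tshift m k)) + (fun j => b (j + Tshift m k)) := rfl
        rw [hup, hup, hup, ih x k hkm' a b, hsh, hsh, hsh, hab,
          ih _ k hkm' (fun j => a (j + Tshift m k)) (fun j => b (j + Tshift m k))]
        ring

lemma Tform_update_smul (m : ℕ) (x : ℕ → ℕ → ℝ) (k : ℕ) (hk : k < m) (c : ℝ) (a : ℕ → ℝ) :
    Tform m (Function.update x k (c • a)) = c * Tform m (Function.update x k a) := by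
  induction m generalizing x k a with
  | zero => omega
  | succ m ih =>
    rcases Nat.eq_zero_or_pos m with rfl | hm
    · have hk0 : k = 0 := by omega
      subst hk0
      show (Function.update x 0 (c • a)) 0 0 = _
      simp [Tform, Function.update_self]
    · rw [Tform_succ m hm, Tform_succ m hm]
      rcases eq_or_ne k m with rfl | hkm
      · have hz : ∀ v : ℕ → ℝ, Tform k (Function.update x k v) = Tform k x :=
          fun v => Tform_congr _ _ _ (fun k' hk' i => by
            rw [Function.update_of_ne (by omega)])
        have hz' : ∀ v : ℕ → ℝ,
            Tform k (fun k' j => Function.update x k v k' (j + Tshift k k'))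
              = Tform k (fun k' j => x k' (j + Tshift k k')) :=
          fun v => Tform_congr _ _ _ (fun k' hk' i => by
            rw [Function.update_of_ne (by omega)])
        rw [hz, hz, hz', hz']
        simp only [Function.update_self, Pi.smul_apply, smul_eq_mul]
        ring
      · have hkm' : k < m := by omega
        have hup : ∀ v : ℕ → ℝ, Function.update x k v m = x m :=
          fun v => Function.update_of_ne (by omega) _ _
        have hsh : ∀ v : ℕ → ℝ,
            (fun k' j => Function.update x k v k' (j + Tshift m k'))
              = Function.update (fun k' j => x k' (j + Tshift m k')) k
                  (fun j => v (j + Tshift m k)) := by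
          intro v
          funext k' j
          rcases eq_or_ne k' k with rfl | h
          · simp [Function.update_self]
          · simp [Function.update_of_ne h]
        have hca : (fun j => (c • a) (j + Tshift m k))
            = c • (fun j => a (j + Tshift m k)) := rfl
        rw [hup, hup, ih x k hkm' a, hsh, hsh, hca,
          ih _ k hkm' (fun j => a (j + Tshift m k))]
        ring

/-- Extension of a tuple of vectors on `Fin n` to `ℕ`-indexed data. -/
def extArg (m n : ℕ) (x : Fin m → Fin n → ℝ) : ℕ → ℕ → ℝ :=
  fun k i => if hk : k < m then (if hi : i < n then x ⟨k, hk⟩ ⟨i, hi⟩ else 0) else 0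

lemma extArg_update {m n : ℕ} [inst : DecidableEq (Fin m)]
    (x : Fin m → Fin n → ℝ) (k : Fin m) (v : Fin n → ℝ) :
    extArg m n (Function.update x k v)
      = Function.update (extArg m n x) (k : ℕ)
          (fun i => if hi : i < n then v ⟨i, hi⟩ else 0) := by
  funext k' i
  rcases eq_or_ne k' (k : ℕ) with rfl | h
  · rw [Function.update_self]
    show (if hk : (k:ℕ) < m then _ else _) = _
    rw [dif_pos k.isLt]
    have : (⟨(k:ℕ), k.isLt⟩ : Fin m) = k := Fin.ext rfl
    rw [this, Function.update_self]
  · rw [Function.update_of_ne h]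
    show (if hk : k' < m then _ else _) = (if hk : k' < m then _ else _)
    split
    · next hk' =>
      rw [Function.update_of_ne (fun he => h (by rw [← he]))]
    · rfl

lemma extVec_add (n : ℕ) (a b : Fin n → ℝ) :
    (fun i => if hi : i < n then (a + b) ⟨i, hi⟩ else 0)
      = (fun i => if hi : i < n then a ⟨i, hi⟩ else 0)
        + (fun i => if hi : i < n then b ⟨i, hi⟩ else 0) := by
  funext i
  by_cases hi : i < n <;> simp [hi]

lemma extVec_smul (n : ℕ) (c : ℝ) (a : Fin n → ℝ) :
    (fun i => if hi : i < n then (c • a) ⟨i, hi⟩ else 0)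
      = c • (fun i => if hi : i < n then a ⟨i, hi⟩ else 0) := by
  funext i
  by_cases hi : i < n <;> simp [hi]

/-- `Tform` as a multilinear map on `(ℝⁿ)^m`. -/
noncomputable def Tmap (m n : ℕ) : MultilinearMap ℝ (fun _ : Fin m => (Fin n → ℝ)) ℝ where
  toFun x := Tform m (extArg m n x)
  map_update_add' {inst} x k a b := by
    rw [extArg_update, extArg_update, extArg_update, extVec_add]
    exact Tform_update_add m _ (k : ℕ) k.isLt _ _
  map_update_smul' {inst} x k c a := by
    rw [extArg_update, extArg_update, extVec_smul]
    exact Tform_update_smul m _ (k : ℕ) k.isLt c _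

lemma Tform_bound (m : ℕ) (hm : 1 ≤ m) (x : ℕ → ℕ → ℝ)
    (hx : ∀ k < m, ∀ i, |x k i| ≤ 1) :
    |Tform m x| ≤ 2 ^ (m - 1) := by
  induction m, hm using Nat.le_induction generalizing x with
  | base =>
    show |x 0 0| ≤ _
    simpa using hx 0 (by omega) 0
  | succ M hM ih =>
    rw [Tform_succ M hM]
    have ha : |x M 0| ≤ 1 := hx M (by omega) 0
    have hb : |x M 1| ≤ 1 := hx M (by omega) 1
    have h1 : |Tform M x| ≤ 2 ^ (M - 1) := ih x (fun k hk i => hx k (by omega) i)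
    have h2 : |Tform M (fun k j => x k (j + Tshift M k))| ≤ 2 ^ (M - 1) :=
      ih _ (fun k hk i => hx k (by omega) _)
    have habs : |x M 0 + x M 1| + |x M 0 - x M 1| ≤ 2 := by
      rw [abs_le] at ha hb
      rcases abs_cases (x M 0 + x M 1) with ⟨e1, _⟩ | ⟨e1, _⟩ <;>
        rcases abs_cases (x M 0 - x M 1) with ⟨e2, _⟩ | ⟨e2, _⟩ <;>
        rw [e1, e2] <;> linarith [ha.1, ha.2, hb.1, hb.2]
    calc |(x M 0 + x M 1) * Tform M x
          + (x M 0 - x M 1) * Tform M (fun k j => x k (j + Tshift M k))|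
        ≤ |x M 0 + x M 1| * |Tform M x|
            + |x M 0 - x M 1| * |Tform M (fun k j => x k (j + Tshift M k))| := by
          calc _ ≤ |(x M 0 + x M 1) * Tform M x|
                + |(x M 0 - x M 1) * Tform M (fun k j => x k (j + Tshift M k))| :=
              abs_add_le _ _
            _ = _ := by rw [abs_mul, abs_mul]
      _ ≤ |x M 0 + x M 1| * 2 ^ (M - 1) + |x M 0 - x M 1| * 2 ^ (M - 1) := by
          gcongr
      _ = (|x M 0 + x M 1| + |x M 0 - x M 1|) * 2 ^ (M - 1) := by ring
      _ ≤ 2 * 2 ^ (M - 1) := by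
          have : (0:ℝ) < 2 ^ (M - 1) := by positivity
          nlinarith
      _ = 2 ^ (M + 1 - 1) := by
          rw [show M + 1 - 1 = (M - 1) + 1 by omega, pow_succ]
          ring

lemma Tmap_bound (m n : ℕ) (hm : 1 ≤ m) (x : Fin m → Fin n → ℝ)
    (hx : ∀ i, ‖x i‖ ≤ 1) : |Tmap m n x| ≤ 2 ^ (m - 1) := by
  show |Tform m (extArg m n x)| ≤ _
  refine Tform_bound m hm _ (fun k hk i => ?_)
  show |extArg m n x k i| ≤ 1
  unfold extArg
  rw [dif_pos hk]
  split
  · next hi =>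
    calc |x ⟨k, hk⟩ ⟨i, hi⟩| = ‖x ⟨k, hk⟩ ⟨i, hi⟩‖ := rfl
      _ ≤ ‖x ⟨k, hk⟩‖ := norm_le_pi_norm _ _
      _ ≤ 1 := hx _
  · norm_num

lemma supNorm_Tmap_le (m n : ℕ) (hm : 1 ≤ m) :
    supNorm m n (Tmap m n) ≤ 2 ^ (m - 1) := by
  apply Real.sSup_le
  · rintro v ⟨x, hx, rfl⟩
    exact Tmap_bound m n hm x hx
  · positivity

lemma supNorm_Tmap_nonneg (m n : ℕ) (hm : 1 ≤ m) :
    0 ≤ supNorm m n (Tmap m n) := by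
  have hmem : |Tmap m n (fun _ => 0)| ∈
      {v : ℝ | ∃ x : Fin m → Fin n → ℝ, (∀ i, ‖x i‖ ≤ 1) ∧ v = |Tmap m n x|} :=
    ⟨fun _ => 0, fun i => by simp, rfl⟩
  have hbdd : BddAbove {v : ℝ | ∃ x : Fin m → Fin n → ℝ, (∀ i, ‖x i‖ ≤ 1) ∧ v = |Tmap m n x|} :=
    ⟨2 ^ (m - 1), by rintro v ⟨x, hx, rfl⟩; exact Tmap_bound m n hm x hx⟩
  exact le_trans (abs_nonneg _) (le_csSup hbdd hmem)

/-- Evaluating the mixed-sum identity for `T_m` at the constant exponent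
`2m/(m+1)`: the `ℓ_{2m/(m+1)}` sum of `|T_m(e_{j₁},...,e_{j_m})|` equals
`2^{(m-1)/m} · 2^{m-1}`; consequently any constant `C` in the real
`m`-linear Bohnenblust–Hille inequality satisfies `C ≥ 2^{1-1/m}`. -/
theorem stmt_8 (m : ℕ) (hm : 2 ≤ m) :
    (∑ idx : Fin m → Fin (2 ^ (m - 1)),
          |Tform m (fun k j => if h : k < m then
              (if j = (idx ⟨k, h⟩ : ℕ) then 1 else 0) else 0)|
            ^ ((2 * (m : ℝ)) / ((m : ℝ) + 1))) ^ (((m : ℝ) + 1) / (2 * (m : ℝ)))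
        = (2:ℝ) ^ (((m : ℝ) - 1) / (m : ℝ)) * 2 ^ (m - 1)
      ∧ ∀ C : ℝ,
        (∀ n : ℕ, ∀ T : MultilinearMap ℝ (fun _ : Fin m => (Fin n → ℝ)) ℝ,
          (∑ idx : Fin m → Fin n,
              |T fun k => eVec n (idx k : ℕ)| ^ ((2 * (m : ℝ)) / ((m : ℝ) + 1)))
              ^ (((m : ℝ) + 1) / (2 * (m : ℝ)))
            ≤ C * supNorm m n T) →
        (2:ℝ) ^ (1 - 1 / (m : ℝ)) ≤ C := by
  have hm1 : (1:ℕ) ≤ m := by omega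
  have hmR : (2:ℝ) ≤ (m:ℝ) := by exact_mod_cast hm
  have hm0 : (0:ℝ) < (m:ℝ) := by linarith
  have hp : (0:ℝ) < (2 * (m:ℝ)) / ((m:ℝ) + 1) := div_pos (by linarith) (by linarith)
  -- identify coefficients
  have hcoef : ∀ idx : Fin m → Fin (2 ^ (m - 1)),
      Tform m (fun k j => if h : k < m then
          (if j = (idx ⟨k, h⟩ : ℕ) then (1:ℝ) else 0) else 0)
        = dCoef m (fun _ => 0) (fun k => if h : k < m then (idx ⟨k, h⟩ : ℕ) else 0) := by
    intro idx
    unfold dCoef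
    refine Tform_congr _ _ _ (fun k hk i => ?_)
    rw [dif_pos hk]
    refine if_congr ?_ rfl rfl
    simp only []
    rw [dif_pos hk]
    omega
  have habs : ∀ j : ℕ → ℕ,
      |dCoef m (fun _ => 0) j| ^ ((2 * (m:ℝ)) / ((m:ℝ) + 1))
        = (dCoef m (fun _ => 0) j) ^ 2 := by
    intro j
    rcases (dCoef_cases m hm1 (fun _ => 0) j).1 with h | h | h <;> rw [h]
    · rw [abs_one, Real.one_rpow]; norm_num
    · rw [abs_zero, Real.zero_rpow (ne_of_gt hp)]; norm_num
    · rw [abs_neg, abs_one, Real.one_rpow]; norm_num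
  have hsumsq := dCoef_sum_sq m hm1 (fun _ => 0) (2 ^ (m - 1))
    (fun k hk => by simpa using Tshift_le m k)
  have hcast : ((m:ℝ) - 1) = ((m - 1 : ℕ) : ℝ) := by
    push_cast [Nat.cast_sub hm1]
    ring
  have hcalc : ((4:ℝ) ^ (m - 1)) ^ (((m:ℝ) + 1) / (2 * (m:ℝ)))
      = (2:ℝ) ^ (((m:ℝ) - 1) / (m:ℝ)) * 2 ^ (m - 1) := by
    have h4 : ((4:ℝ) ^ (m - 1)) = (2:ℝ) ^ ((2 * (m - 1) : ℕ) : ℝ) := by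
      rw [Real.rpow_natCast, pow_mul]
      norm_num
    have h2 : ((2:ℝ) ^ (m - 1) : ℝ) = (2:ℝ) ^ (((m - 1 : ℕ) : ℕ) : ℝ) := by
      rw [Real.rpow_natCast]
    rw [h4, h2, ← Real.rpow_mul (by norm_num : (0:ℝ) ≤ 2),
      ← Real.rpow_add (by norm_num : (0:ℝ) < 2)]
    congr 1
    push_cast [Nat.cast_sub hm1]
    field_simp
    ring
  have hpart1 : (∑ idx : Fin m → Fin (2 ^ (m - 1)),
        |Tform m (fun k j => if h : k < m then
            (if j = (idx ⟨k, h⟩ : ℕ) then (1:ℝ) else 0) else 0)|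
          ^ ((2 * (m : ℝ)) / ((m : ℝ) + 1))) ^ (((m : ℝ) + 1) / (2 * (m : ℝ)))
      = (2:ℝ) ^ (((m : ℝ) - 1) / (m : ℝ)) * 2 ^ (m - 1) := by
    calc (∑ idx : Fin m → Fin (2 ^ (m - 1)),
          |Tform m (fun k j => if h : k < m then
              (if j = (idx ⟨k, h⟩ : ℕ) then (1:ℝ) else 0) else 0)|
            ^ ((2 * (m : ℝ)) / ((m : ℝ) + 1))) ^ (((m : ℝ) + 1) / (2 * (m : ℝ)))
        = (∑ idx : Fin m → Fin (2 ^ (m - 1)),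
            (dCoef m (fun _ => 0)
              (fun k => if h : k < m then (idx ⟨k, h⟩ : ℕ) else 0)) ^ 2)
            ^ (((m : ℝ) + 1) / (2 * (m : ℝ))) := by
          congr 1
          refine Finset.sum_congr rfl (fun idx _ => ?_)
          rw [hcoef idx, habs]
      _ = ((4:ℝ) ^ (m - 1)) ^ (((m : ℝ) + 1) / (2 * (m : ℝ))) := by rw [hsumsq]
      _ = _ := hcalc
  refine ⟨hpart1, fun C hC => ?_⟩
  have hC1 := hC (2 ^ (m - 1)) (Tmap m (2 ^ (m - 1)))
  have hTe : ∀ idx : Fin m → Fin (2 ^ (m - 1)),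
      Tmap m (2 ^ (m - 1)) (fun k => eVec (2 ^ (m - 1)) (idx k : ℕ))
        = Tform m (fun k j => if h : k < m then
            (if j = (idx ⟨k, h⟩ : ℕ) then (1:ℝ) else 0) else 0) := by
    intro idx
    show Tform m (extArg m (2 ^ (m - 1)) fun k => eVec (2 ^ (m - 1)) (idx k : ℕ)) = _
    refine Tform_congr _ _ _ (fun k hk i => ?_)
    unfold extArg eVec
    rw [dif_pos hk, dif_pos hk]
    split
    · next hi => rfl
    · next hi =>
      rw [if_neg (by
        have := (idx ⟨k, hk⟩).isLt
        omega)]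
  have hLe : (2:ℝ) ^ (((m : ℝ) - 1) / (m : ℝ)) * 2 ^ (m - 1)
      ≤ C * supNorm m (2 ^ (m - 1)) (Tmap m (2 ^ (m - 1))) := by
    calc (2:ℝ) ^ (((m : ℝ) - 1) / (m : ℝ)) * 2 ^ (m - 1)
        = (∑ idx : Fin m → Fin (2 ^ (m - 1)),
            |Tmap m (2 ^ (m - 1)) (fun k => eVec (2 ^ (m - 1)) (idx k : ℕ))|
              ^ ((2 * (m : ℝ)) / ((m : ℝ) + 1))) ^ (((m : ℝ) + 1) / (2 * (m : ℝ))) := by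
          rw [← hpart1]
          congr 1
          exact Finset.sum_congr rfl (fun idx _ => by rw [hTe idx])
      _ ≤ _ := hC1
  set S := supNorm m (2 ^ (m - 1)) (Tmap m (2 ^ (m - 1))) with hS
  have hS1 : S ≤ 2 ^ (m - 1) := supNorm_Tmap_le m _ hm1
  have hS0 : 0 ≤ S := supNorm_Tmap_nonneg m _ hm1
  have hLpos : (0:ℝ) < (2:ℝ) ^ (((m : ℝ) - 1) / (m : ℝ)) * 2 ^ (m - 1) := by
    have := Real.rpow_pos_of_pos (show (0:ℝ) < 2 by norm_num) (((m : ℝ) - 1) / (m : ℝ))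
    positivity
  have hC0 : 0 ≤ C := by
    by_contra h
    push_neg at h
    have : C * S ≤ 0 := mul_nonpos_of_nonpos_of_nonneg h.le hS0
    linarith
  have hfin : (2:ℝ) ^ (((m : ℝ) - 1) / (m : ℝ)) * 2 ^ (m - 1) ≤ C * 2 ^ (m - 1) := by
    calc (2:ℝ) ^ (((m : ℝ) - 1) / (m : ℝ)) * 2 ^ (m - 1) ≤ C * S := hLe
      _ ≤ C * 2 ^ (m - 1) := mul_le_mul_of_nonneg_left hS1 hC0
  have h2pos : (0:ℝ) < 2 ^ (m - 1) := by positivity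
  have : (2:ℝ) ^ (((m : ℝ) - 1) / (m : ℝ)) ≤ C := le_of_mul_le_mul_right hfin h2pos
  have hexp : 1 - 1 / (m:ℝ) = ((m:ℝ) - 1) / (m:ℝ) := by
    field_simp
  rw [hexp]
  exact this
end
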